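/- arXiv:2211.00548 — 2 statements merged into one kernel-verified Lean document; each statement's English description precedes it below -/
import Mathlib

section
/- Let λ₁ ≥ … ≥ λ_n be reals with all λ_i > 0, and x0 ∈ R^n with x0_i ≠ 0 for all i. Define f(μ) = Σ_i λ_i (x0_i/(1+μλ_i))² − 1 on the interval I = (−1/λ₁, ∞). Then f is strictly decreasing on I, tends to +∞ as μ → (−1/λ₁)⁺, tends to −1 as μ → ∞, and hence has a unique root on I. -/
open Filter

theorem secular_unique_root (n : ℕ) (hn : 0 < n) (lam : Fin n → ℝ)
    (hpos : ∀ i, 0 < lam i)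
    (hsorted : ∀ i j : Fin n, i ≤ j → lam j ≤ lam i)
    (x0 : Fin n → ℝ) (hx0 : ∀ i, x0 i ≠ 0)
    (f : ℝ → ℝ) (hf : f = fun μ => ∑ i, lam i * (x0 i / (1 + μ * lam i)) ^ 2 - 1)
    (lam1 : ℝ) (hlam1 : lam1 = lam ⟨0, hn⟩) :
    StrictAntiOn f (Set.Ioi (-1 / lam1)) ∧
    Tendsto f (nhdsWithin (-1 / lam1) (Set.Ioi (-1 / lam1))) atTop ∧
    Tendsto f atTop (nhds (-1)) ∧
    ∃! μ : ℝ, μ ∈ Set.Ioi (-1 / lam1) ∧ f μ = 0 := by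
  have hlam1pos : 0 < lam1 := hlam1 ▸ hpos _
  set c : ℝ := -1 / lam1 with hc
  have i0 : Fin n := ⟨0, hn⟩
  have hle : ∀ i, lam i ≤ lam1 := by
    intro i
    rw [hlam1]
    exact hsorted ⟨0, hn⟩ i (Fin.mk_le_mk.mpr (Nat.zero_le _))
  have hclam1 : 1 + c * lam1 = 0 := by rw [hc, div_mul_cancel₀ _ hlam1pos.ne']; ring
  have hden : ∀ (i : Fin n), ∀ μ ∈ Set.Ioi c, 0 < 1 + μ * lam i := by
    intro i μ hμ
    have h1 : c * lam i < μ * lam i := mul_lt_mul_of_pos_right hμ (hpos i)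
    have h2 : (0:ℝ) ≤ 1 + c * lam i := by
      have hcv : c * lam i = -(lam i / lam1) := by
        rw [hc]; field_simp
      rw [hcv]
      have := (div_le_one hlam1pos).mpr (hle i)
      linarith
    linarith
  -- strict antitonicity
  have hanti : StrictAntiOn f (Set.Ioi c) := by
    intro a ha b hb hab
    rw [hf]
    simp only
    have hterm : ∀ i ∈ Finset.univ, lam i * (x0 i / (1 + b * lam i)) ^ 2 <
        lam i * (x0 i / (1 + a * lam i)) ^ 2 := by
      intro i _
      have hda := hden i a ha
      have hdb := hden i b hb
      have hlt : 1 + a * lam i < 1 + b * lam i := by nlinarith [hpos i]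
      have hx2 : (0:ℝ) < (x0 i) ^ 2 := pow_pos (abs_pos.mpr (hx0 i)) 2 |>.trans_le (by rw [sq_abs])
      have hsq : (1 + a * lam i) ^ 2 < (1 + b * lam i) ^ 2 := by nlinarith
      have : (x0 i) ^ 2 / (1 + b * lam i) ^ 2 < (x0 i) ^ 2 / (1 + a * lam i) ^ 2 :=
        div_lt_div_of_pos_left hx2 (pow_pos hda 2) hsq
      rw [div_pow, div_pow]
      exact mul_lt_mul_of_pos_left this (hpos i)
    have hne : (Finset.univ : Finset (Fin n)).Nonempty := ⟨⟨0, hn⟩, Finset.mem_univ _⟩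
    have := Finset.sum_lt_sum_of_nonempty hne hterm
    linarith
  -- tendsto atTop near c
  have htop : Tendsto f (nhdsWithin c (Set.Ioi c)) atTop := by
    have h1 : Tendsto (fun μ : ℝ => 1 + μ * lam1) (nhdsWithin c (Set.Ioi c))
        (nhdsWithin 0 (Set.Ioi 0)) := by
      apply tendsto_nhdsWithin_of_tendsto_nhds_of_eventually_within
      · have hcont : Tendsto (fun μ : ℝ => 1 + μ * lam1) (nhds c) (nhds (1 + c * lam1)) := by
          exact (Continuous.tendsto (by continuity) c)
        rw [hclam1] at hcont
        exact hcont.mono_left nhdsWithin_le_nhds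
      · filter_upwards [self_mem_nhdsWithin] with μ hμ
        have := hden ⟨0, hn⟩ μ hμ
        rw [← hlam1] at this
        exact this
    have h2 : Tendsto (fun μ : ℝ => (1 + μ * lam1)⁻¹) (nhdsWithin c (Set.Ioi c)) atTop :=
      tendsto_inv_nhdsGT_zero.comp h1
    have h3 : Tendsto (fun μ : ℝ => ((1 + μ * lam1)⁻¹) ^ 2) (nhdsWithin c (Set.Ioi c)) atTop :=
      (tendsto_pow_atTop (two_ne_zero)).comp h2
    have hcx : 0 < lam1 * (x0 ⟨0, hn⟩) ^ 2 := by
      have : (0:ℝ) < (x0 ⟨0, hn⟩) ^ 2 :=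
        (sq_nonneg _).lt_of_ne (Ne.symm (pow_ne_zero 2 (hx0 _)))
      exact mul_pos hlam1pos this
    have h4 : Tendsto (fun μ : ℝ => lam1 * (x0 ⟨0, hn⟩) ^ 2 * ((1 + μ * lam1)⁻¹) ^ 2 - 1)
        (nhdsWithin c (Set.Ioi c)) atTop :=
      tendsto_atTop_add_const_right _ (-1) (h3.const_mul_atTop hcx)
    apply tendsto_atTop_mono' _ _ h4
    filter_upwards [self_mem_nhdsWithin] with μ hμ
    rw [hf]
    simp only
    have hsum : lam ⟨0, hn⟩ * (x0 ⟨0, hn⟩ / (1 + μ * lam ⟨0, hn⟩)) ^ 2 ≤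
        ∑ i, lam i * (x0 i / (1 + μ * lam i)) ^ 2 := by
      apply Finset.single_le_sum (f := fun i => lam i * (x0 i / (1 + μ * lam i)) ^ 2)
        (fun i _ => mul_nonneg (hpos i).le (sq_nonneg _)) (Finset.mem_univ _)
    have heq : lam1 * (x0 ⟨0, hn⟩) ^ 2 * ((1 + μ * lam1)⁻¹) ^ 2 =
        lam ⟨0, hn⟩ * (x0 ⟨0, hn⟩ / (1 + μ * lam ⟨0, hn⟩)) ^ 2 := by
      rw [← hlam1, div_pow, div_eq_mul_inv, ← inv_pow]
      ring
    rw [heq]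
    linarith
  -- tendsto -1 at infinity
  have hinf : Tendsto f atTop (nhds (-1)) := by
    rw [hf]
    have hsum0 : Tendsto (fun μ : ℝ => ∑ i, lam i * (x0 i / (1 + μ * lam i)) ^ 2) atTop
        (nhds 0) := by
      have hz : (0:ℝ) = ∑ _i : Fin n, (0:ℝ) := by simp
      rw [hz]
      apply tendsto_finset_sum
      intro i _
      have hd : Tendsto (fun μ : ℝ => 1 + μ * lam i) atTop atTop :=
        tendsto_atTop_add_const_left _ 1 (tendsto_id.atTop_mul_const (hpos i))
      have hd2 : Tendsto (fun μ : ℝ => (1 + μ * lam i) ^ 2) atTop atTop :=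
        (tendsto_pow_atTop two_ne_zero).comp hd
      have hinv : Tendsto (fun μ : ℝ => ((1 + μ * lam i) ^ 2)⁻¹) atTop (nhds 0) :=
        tendsto_inv_atTop_zero.comp hd2
      have := hinv.const_mul (lam i * (x0 i) ^ 2)
      rw [mul_zero] at this
      convert this using 2 with μ
      rw [div_pow]
      ring
    have := hsum0.sub_const 1
    rw [zero_sub] at this
    exact this
  -- continuity
  have hcont : ContinuousOn f (Set.Ioi c) := by
    rw [hf]
    apply ContinuousOn.sub _ continuousOn_const
    apply continuousOn_finset_sum
    intro i _
    apply ContinuousOn.mul continuousOn_const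
    apply ContinuousOn.pow
    apply ContinuousOn.div continuousOn_const (by fun_prop)
    intro μ hμ
    exact (hden i μ hμ).ne'
  refine ⟨hanti, htop, hinf, ?_⟩
  -- existence
  obtain ⟨a, hfa, ha⟩ : ∃ a, 0 < f a ∧ a ∈ Set.Ioi c := by
    have h1 := htop.eventually (eventually_gt_atTop 0)
    exact (h1.and self_mem_nhdsWithin).exists
  obtain ⟨b, hab, hfb⟩ : ∃ b, a < b ∧ f b < 0 := by
    have h1 := hinf.eventually (eventually_lt_nhds (by norm_num : (-1:ℝ) < 0))
    exact ((eventually_gt_atTop a).and h1).exists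
  have hb : b ∈ Set.Ioi c := lt_trans ha hab
  have hIcc : Set.Icc a b ⊆ Set.Ioi c := fun x hx => lt_of_lt_of_le ha hx.1
  have hivt : Set.Icc (f b) (f a) ⊆ f '' Set.Icc a b :=
    intermediate_value_Icc' hab.le (hcont.mono hIcc)
  obtain ⟨μ, hμab, hμ0⟩ : ∃ μ ∈ Set.Icc a b, f μ = 0 := by
    have : (0:ℝ) ∈ Set.Icc (f b) (f a) := ⟨hfb.le, hfa.le⟩
    obtain ⟨μ, hμ1, hμ2⟩ := hivt this
    exact ⟨μ, hμ1, hμ2⟩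
  refine ⟨μ, ⟨hIcc hμab, hμ0⟩, ?_⟩
  rintro ν ⟨hν, hν0⟩
  exact hanti.injOn hν (hIcc hμab) (by rw [hν0, hμ0])
end

section
/- Let A be an invertible symmetric n×n matrix and b ∈ R^n, c ∈ R. Then c ≠ bᵀA⁻¹b/4 if and only if rank(A*) > rank([A | b/2]), where A* is the extended (n+1)×(n+1) matrix with corner c, border b/2, and block A, and [A | b/2] is the n×(n+1) matrix obtained by appending b/2 as a column to A. -/
open Matrix

theorem aux_rank_eq_card_iff_det {m : ℕ} (M : Matrix (Fin m) (Fin m) ℝ) :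
    M.rank = m ↔ M.det ≠ 0 := by
  constructor
  · intro h hdet
    obtain ⟨v, hv, hMv⟩ := (Matrix.exists_mulVec_eq_zero_iff).mpr hdet
    have hker : LinearMap.ker M.mulVecLin ≠ ⊥ := by
      intro hbot
      have hvk : v ∈ LinearMap.ker M.mulVecLin := by simpa using hMv
      rw [hbot] at hvk
      exact hv (by simpa using hvk)
    have h1 : 0 < Module.finrank ℝ (LinearMap.ker M.mulVecLin) := by
      rw [Module.finrank_pos_iff]
      exact Submodule.nontrivial_iff_ne_bot.mpr hker
    have h2 := LinearMap.finrank_range_add_finrank_ker M.mulVecLin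
    have h3 : Module.finrank ℝ (Fin m → ℝ) = m := by simp
    rw [h3] at h2
    have h4 : M.rank = Module.finrank ℝ (LinearMap.range M.mulVecLin) := rfl
    omega
  · intro h
    have := Matrix.rank_of_isUnit M ((Matrix.isUnit_iff_isUnit_det M).mpr
      (isUnit_iff_ne_zero.mpr h))
    simpa using this

theorem gamma_ne_zero_iff_rank (n : ℕ) (A : Matrix (Fin n) (Fin n) ℝ) (hA : A.IsSymm)
    (hinv : IsUnit A.det) (b : Fin n → ℝ) (c : ℝ)
    (Astar : Matrix (Fin (n + 1)) (Fin (n + 1)) ℝ)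
    (hAstar : Astar = Matrix.of (Fin.cons (Fin.cons c (fun j => b j / 2))
      (fun i => Fin.cons (b i / 2) (fun j => A i j))))
    (Aaug : Matrix (Fin n) (Fin (n + 1)) ℝ)
    (hAaug : Aaug = Matrix.of (fun i => Fin.snoc (A i) (b i / 2))) :
    c ≠ b ⬝ᵥ A⁻¹.mulVec b / 4 ↔ Aaug.rank < Astar.rank := by
  have hAunit : IsUnit A := (Matrix.isUnit_iff_isUnit_det A).mpr hinv
  have hrA : A.rank = n := by
    simpa using Matrix.rank_of_isUnit A hAunit
  -- rank Aaug = n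
  have hrAaug : Aaug.rank = n := by
    apply le_antisymm
    · simpa using Aaug.rank_le_card_height
    · have hF : Aaug * (Matrix.of fun (k : Fin (n+1)) (j : Fin n) =>
          if k = Fin.castSucc j then (1:ℝ) else 0) = A := by
        ext i j
        simp [Matrix.mul_apply, hAaug, Fin.snoc_castSucc]
      calc n = A.rank := hrA.symm
        _ ≤ Aaug.rank := by rw [← hF]; exact Matrix.rank_mul_le_left _ _
  rw [hrAaug]
  -- rank Astar ≥ n
  have hE : (Matrix.of fun (i : Fin n) (k : Fin (n+1)) =>
      if k = Fin.succ i then (1:ℝ) else 0) * Astar *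
      (Matrix.of fun (k : Fin (n+1)) (j : Fin n) =>
      if k = Fin.succ j then (1:ℝ) else 0) = A := by
    ext i j
    simp [Matrix.mul_apply, hAstar]
  have hge : n ≤ Astar.rank := by
    have h1 := Matrix.rank_mul_le_right (Matrix.of fun (i : Fin n) (k : Fin (n+1)) =>
      if k = Fin.succ i then (1:ℝ) else 0) Astar
    have h2 := Matrix.rank_mul_le_left ((Matrix.of fun (i : Fin n) (k : Fin (n+1)) =>
      if k = Fin.succ i then (1:ℝ) else 0) * Astar)
      (Matrix.of fun (k : Fin (n+1)) (j : Fin n) => if k = Fin.succ j then (1:ℝ) else 0)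
    rw [hE] at h2
    omega
  -- block decomposition
  have hAdet : A.det ≠ 0 := by
    intro h; rw [h] at hinv; simp at hinv
  haveI : Invertible A := A.invertibleOfIsUnitDet hinv
  set f : Fin 1 ⊕ Fin n ≃ Fin (n + 1) :=
    finSumFinEquiv.trans (finCongr (Nat.add_comm 1 n)) with hf
  have hsub : Astar.submatrix f f = Matrix.fromBlocks (Matrix.of fun _ _ => c)
      (Matrix.of fun (_ : Fin 1) j => b j / 2)
      (Matrix.of fun i (_ : Fin 1) => b i / 2) A := by
    have hf0 : ∀ (i : Fin 1), f (Sum.inl i) = 0 := by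
      intro i
      apply Fin.ext
      simp [hf, finSumFinEquiv, Fin.fin_one_eq_zero i]
    have hfs : ∀ (j : Fin n), f (Sum.inr j) = Fin.succ j := by
      intro j
      apply Fin.ext
      simp [hf, finSumFinEquiv, Nat.add_comm]
    ext i j
    cases i with
    | inl i => cases j with
      | inl j => simp [hf0, hAstar]
      | inr j => simp [hf0, hfs, hAstar]
    | inr i => cases j with
      | inl j => simp [hf0, hfs, hAstar]
      | inr j => simp [hfs, hAstar]
  have hdet : Astar.det = A.det * (c - b ⬝ᵥ A⁻¹.mulVec b / 4) := by
    rw [← Matrix.det_submatrix_equiv_self f Astar, hsub, Matrix.det_fromBlocks₂₂]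
    congr 1
    rw [Matrix.det_fin_one]
    have hinvOf : (⅟A : Matrix (Fin n) (Fin n) ℝ) = A⁻¹ := (Matrix.invOf_eq_nonsing_inv A)
    simp only [Matrix.sub_apply, hinvOf, Matrix.mul_apply, Matrix.of_apply,
      dotProduct, Matrix.mulVec, Finset.sum_div]
    congr 1
    rw [show (∑ x, (∑ y, b y / 2 * A⁻¹ y x) * (b x / 2)) =
        ∑ x, ∑ y, b y / 2 * A⁻¹ y x * (b x / 2) from by simp [Finset.sum_mul],
      Finset.sum_comm]
    apply Finset.sum_congr rfl
    intro i _
    rw [Finset.mul_sum, Finset.sum_div]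
    apply Finset.sum_congr rfl
    intro j _
    ring
  constructor
  · intro hne
    have : Astar.det ≠ 0 := by
      rw [hdet]
      exact mul_ne_zero hAdet (sub_ne_zero_of_ne hne)
    have := (aux_rank_eq_card_iff_det Astar).mpr this
    omega
  · intro hlt
    intro heq
    have : Astar.det = 0 := by rw [hdet, heq]; ring
    have hne := (aux_rank_eq_card_iff_det Astar).not.mpr (by simpa using this)
    have hle : Astar.rank ≤ n + 1 := by simpa using Astar.rank_le_card_height
    omega
end
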